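/- For C > 0, define Φ_C(p) = −(1/C)·log(1 − p + p·e^{−C}) for p ∈ [0,1). Then for any 0 ≤ q ≤ p < 1, sup_{C > 0} [C·Φ_C(p) − C·q] = kl(q : p), where kl(q:p) = q log(q/p) + (1−q) log((1−q)/(1−p)). -/

import Mathlib

/-!
Write `A = 1 - p + p e^{-C}` for the moment generating function of Bernoulli(p) at `-C`, so
that `C Φ_C(p) - C q = -log A - C q`. Tilting Bernoulli(p) by `e^{-C x}` gives Bernoulli(r)
with `r = p e^{-C} / A`, and expanding the logarithms shows
`C Φ_C(p) - C q = kl(q : p) - kl(q : r)`.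
Since `kl(q : r) ≥ 0`, every value is at most `kl(q : p)`. As `C` runs over `(0, ∞)` the
tilted parameter `r` runs over `(0, p)`, whose closure contains `q`, and `kl(q : ·)` is
continuous at `q` with `kl(q : q) = 0`, so `kl(q : p)` is the least upper bound.
-/

/-- The Catoni transform `Φ_C(p) = -(1/C)·log(1 - p + p·e^{-C})`. -/
noncomputable def PhiC (C p : ℝ) : ℝ := -(1 / C) * Real.log (1 - p + p * Real.exp (-C))

/-- Binary KL divergence `kl(q : p) = q log(q/p) + (1-q) log((1-q)/(1-p))`. -/
noncomputable def klBin (q p : ℝ) : ℝ :=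
  q * Real.log (q / p) + (1 - q) * Real.log ((1 - q) / (1 - p))

open Real Set InformationTheory

lemma klBin_eq_klFun {q r : ℝ} (hr0 : 0 < r) (hr1 : r < 1) :
    klBin q r = r * klFun (q / r) + (1 - r) * klFun ((1 - q) / (1 - r)) := by
  have : 1 - r ≠ 0 := by linarith
  simp only [klBin, klFun]
  field_simp
  ring

lemma klBin_nonneg {q r : ℝ} (hq0 : 0 ≤ q) (hq1 : q ≤ 1) (hr0 : 0 < r) (hr1 : r < 1) :
    0 ≤ klBin q r := by
  rw [klBin_eq_klFun hr0 hr1]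
  have := klFun_nonneg (div_nonneg hq0 hr0.le)
  have := klFun_nonneg (div_nonneg (sub_nonneg.2 hq1) (sub_pos.2 hr1).le)
  have : 0 ≤ 1 - r := by linarith
  positivity

lemma klBin_self (q : ℝ) : klBin q q = 0 := by
  have h (x : ℝ) : x * log (x / x) = 0 := by
    rcases eq_or_ne x 0 with rfl | hx <;> simp [*]
  simp only [klBin, h, add_zero]

lemma continuousAt_klBin_self {q : ℝ} (hq1 : q ≠ 1) : ContinuousAt (klBin q) q := by
  have h1q : 1 - q ≠ 0 := sub_ne_zero.2 hq1.symm
  rcases eq_or_ne q 0 with rfl | hq0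
  · have : klBin 0 = fun r => log (1 / (1 - r)) := by ext r; simp [klBin]
    rw [this]
    fun_prop (disch := simp)
  · unfold klBin
    have : ContinuousAt (fun r => log (q / r)) q :=
      (continuousAt_log (by simp [div_self hq0])).comp (continuousAt_const.div continuousAt_id hq0)
    have : ContinuousAt (fun r => log ((1 - q) / (1 - r))) q :=
      (continuousAt_log (by simp [div_self h1q])).comp
        (continuousAt_const.div (continuousAt_const.sub continuousAt_id) h1q)
    fun_prop

/-- Bernoulli(p) tilted by the weight `e^{-C x}` is Bernoulli(`bernoulliTilt p C`). -/
noncomputable def bernoulliTilt (p C : ℝ) : ℝ := p * exp (-C) / (1 - p + p * exp (-C))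

section
variable {p : ℝ}

lemma one_sub_add_mul_exp_pos (hp0 : 0 ≤ p) (hp1 : p < 1) (C : ℝ) :
    0 < 1 - p + p * exp (-C) := by
  have := exp_pos (-C); nlinarith

lemma mul_PhiC {C : ℝ} (hC : C ≠ 0) (p : ℝ) :
    C * PhiC C p = -log (1 - p + p * exp (-C)) := by
  rw [PhiC, ← mul_assoc, mul_neg, mul_one_div_cancel hC, neg_one_mul]

lemma one_sub_bernoulliTilt (hp0 : 0 ≤ p) (hp1 : p < 1) (C : ℝ) :
    1 - bernoulliTilt p C = (1 - p) / (1 - p + p * exp (-C)) := by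
  have := (one_sub_add_mul_exp_pos hp0 hp1 C).ne'
  rw [bernoulliTilt]; field_simp; ring

lemma mul_PhiC_sub_eq_klBin_sub (hp0 : 0 < p) (hp1 : p < 1) {C : ℝ} (hC : C ≠ 0) (q : ℝ) :
    C * PhiC C p - C * q = klBin q p - klBin q (bernoulliTilt p C) := by
  set A := 1 - p + p * exp (-C)
  have hA : 0 < A := one_sub_add_mul_exp_pos hp0.le hp1 C
  have hq_term : q * log (q / bernoulliTilt p C) = q * log (q / p) + q * (C + log A) := by
    rcases eq_or_ne q 0 with rfl | hq
    · simp
    have : q / bernoulliTilt p C = q / p * (exp C * A) := by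
      simp only [bernoulliTilt, A, exp_neg]; field_simp
    rw [this, log_mul (div_ne_zero hq hp0.ne') (by positivity), log_mul (exp_pos C).ne' hA.ne',
      log_exp]
    ring
  have hq1_term : (1 - q) * log ((1 - q) / (1 - bernoulliTilt p C)) =
      (1 - q) * log ((1 - q) / (1 - p)) + (1 - q) * log A := by
    rcases eq_or_ne (1 - q) 0 with h | hq
    · simp [h]
    rw [one_sub_bernoulliTilt hp0.le hp1, div_div_eq_mul_div, mul_div_right_comm, log_mul
      (div_ne_zero hq (by linarith)) hA.ne', mul_add]
  rw [mul_PhiC hC, klBin, klBin, hq_term, hq1_term]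
  ring

lemma bernoulliTilt_mem_Ioo (hp0 : 0 < p) (hp1 : p < 1) {C : ℝ} (hC : 0 < C) :
    bernoulliTilt p C ∈ Ioo 0 p := by
  have hA := one_sub_add_mul_exp_pos hp0.le hp1 C
  have he : exp (-C) < 1 := exp_lt_one_iff.2 (neg_lt_zero.2 hC)
  refine ⟨by unfold bernoulliTilt; positivity, ?_⟩
  rw [bernoulliTilt, div_lt_iff₀ hA]
  nlinarith [mul_pos (mul_pos hp0 (sub_pos.2 hp1)) (sub_pos.2 he)]

lemma bernoulliTilt_log (hp1 : p < 1) {r : ℝ} (hr : r ∈ Ioo 0 p) :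
    bernoulliTilt p (log (p * (1 - r) / (r * (1 - p)))) = r := by
  obtain ⟨hr0, hrp⟩ := hr
  have : 0 < 1 - p := by linarith
  have : 0 < 1 - r := by linarith
  have : 0 < p := hr0.trans hrp
  rw [bernoulliTilt, exp_neg, exp_log (by positivity), inv_div]
  field_simp
  ring

lemma image_bernoulliTilt_Ioi (hp0 : 0 < p) (hp1 : p < 1) :
    bernoulliTilt p '' Ioi 0 = Ioo 0 p := by
  refine Subset.antisymm (image_subset_iff.2 fun C hC => bernoulliTilt_mem_Ioo hp0 hp1 hC)
    fun r hr => ⟨_, ?_, bernoulliTilt_log hp1 hr⟩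
  obtain ⟨hr0, hrp⟩ := hr
  refine log_pos ((one_lt_div (by nlinarith)).2 ?_)
  nlinarith

end

/-- `sup_{C > 0} [C·Φ_C(p) − C·q] = kl(q : p)` for `0 ≤ q ≤ p < 1`. -/
theorem sup_catoni_eq_kl (q p : ℝ) (hq : 0 ≤ q) (hqp : q ≤ p) (hp : p < 1) :
    sSup {x : ℝ | ∃ C > 0, x = C * PhiC C p - C * q} = klBin q p := by
  obtain rfl | hp0 := (hq.trans hqp).eq_or_lt
  · obtain rfl : q = 0 := le_antisymm hqp hq
    simp [PhiC, klBin, exists_gt]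
  have hS : {x : ℝ | ∃ C > 0, x = C * PhiC C p - C * q} =
      (fun r => klBin q p - klBin q r) '' Ioo 0 p := by
    rw [← image_bernoulliTilt_Ioi hp0 hp, image_image]
    ext x
    simp only [mem_ofPred_eq, mem_image, mem_Ioi, eq_comm (a := x)]
    exact exists_congr fun C => and_congr_right fun hC => by
      rw [mul_PhiC_sub_eq_klBin_sub hp0 hp hC.ne']
  rw [hS]
  refine (isLUB_of_mem_closure ?_ ?_).csSup_eq ((nonempty_Ioo.2 hp0).image _)
  · rintro _ ⟨r, hr, rfl⟩
    linarith [klBin_nonneg hq (hqp.trans hp.le) hr.1 (hr.2.trans hp)]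
  · have hcont : ContinuousWithinAt (fun r => klBin q p - klBin q r) (Ioo 0 p) q :=
      (continuousAt_const.sub (continuousAt_klBin_self (hqp.trans_lt hp).ne)).continuousWithinAt
    have hq_mem : q ∈ closure (Ioo 0 p) := by rw [closure_Ioo hp0.ne]; exact ⟨hq, hqp⟩
    simpa [klBin_self] using hcont.mem_closure_image hq_mem
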